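/- arXiv:1707.08755 — 6 statements merged into one kernel-verified Lean document; each statement's English description precedes it below -/
import Mathlib

section
/- Let G be a finite directed multigraph with vertex set N partitioned into V₊, V₋, and nonvoters. Suppose every nonvoter has at least one outgoing edge and the graph restricted to nonvoters is acyclic (every walk from a nonvoter eventually reaches a voter). Then there is a unique function r : N → ℝ with r(a) = 1 for a ∈ V₊, r(a) = −1 for a ∈ V₋, and r(a) = (Σ_{b ∈ succ(a)} r(b)) / |succ(a)| for every nonvoter a, where succ(a) is the multiset of endpoints of a's outgoing edges. -/
/-- A voting network: a finite directed multigraph on `Fin n` with disjoint sets of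
`+` voters and `−` voters; `E a b` is the number of parallel edges `(a,b)`,
meaning `b` influences `a` with multiplicity `E a b`. -/
structure VN where
  n : ℕ
  plus : Finset (Fin n)
  minus : Finset (Fin n)
  E : Fin n → Fin n → ℕ
  hdisj : Disjoint plus minus

/-- `a` is a nonvoter. -/
def VN.nonvoter (G : VN) (a : Fin G.n) : Prop := a ∉ G.plus ∧ a ∉ G.minus

/-- Number of outgoing edges of `a`, with multiplicity. -/
def VN.outdeg (G : VN) (a : Fin G.n) : ℕ := ∑ b, G.E a b

/-- `r` is a random-walk value function: `1` on `+` voters, `−1` on `−` voters, `0` on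
nonvoter sinks, and the multiplicity-weighted average of out-neighbours' values on
every other nonvoter. -/
def RWeq (G : VN) (r : Fin G.n → ℝ) : Prop :=
  (∀ a ∈ G.plus, r a = 1) ∧ (∀ a ∈ G.minus, r a = -1) ∧
  (∀ a, G.nonvoter a → G.outdeg a = 0 → r a = 0) ∧
  (∀ a, G.nonvoter a → G.outdeg a ≠ 0 →
    r a = (∑ b, (G.E a b : ℝ) * r b) / (G.outdeg a : ℝ))

/-- The nonvoter-induced subgraph is acyclic: the edge relation restricted to
nonvoters is well-founded (every walk among nonvoters eventually reaches a voter). -/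
def VN.Acyclic (G : VN) : Prop :=
  WellFounded (fun b a : Fin G.n => G.nonvoter a ∧ G.nonvoter b ∧ 0 < G.E a b)

/-- Group random-walk recommendation: the sign of the sum of signs of members' values. -/
noncomputable def groupRec (G : VN) (r : Fin G.n → ℝ) (C : Finset (Fin G.n)) : ℝ :=
  Real.sign (∑ c ∈ C, Real.sign (r c))

/-- Existence and uniqueness of the individual random-walk recommendation values on a
voting network whose nonvoter subgraph is acyclic and in which every nonvoter has at
least one outgoing edge. -/
theorem randomWalk_exists_unique (G : VN) (hacyc : G.Acyclic)
    (hout : ∀ a, G.nonvoter a → G.outdeg a ≠ 0) :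
    ∃! r : Fin G.n → ℝ,
      (∀ a ∈ G.plus, r a = 1) ∧ (∀ a ∈ G.minus, r a = -1) ∧
      (∀ a, G.nonvoter a →
        r a = (∑ b, (G.E a b : ℝ) * r b) / (G.outdeg a : ℝ)) := by
  classical
  set rel : Fin G.n → Fin G.n → Prop :=
    fun b a => G.nonvoter a ∧ G.nonvoter b ∧ 0 < G.E a b with hrel
  set F : ∀ a : Fin G.n, (∀ b, rel b a → ℝ) → ℝ := fun a rec =>
    if ha : a ∈ G.plus then 1 else if hm : a ∈ G.minus then (-1:ℝ) else
    (∑ b, (G.E a b : ℝ) *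
      (if hb : G.nonvoter b ∧ 0 < G.E a b then rec b ⟨⟨ha, hm⟩, hb.1, hb.2⟩
       else if b ∈ G.plus then 1 else if b ∈ G.minus then -1 else 0)) /
      (G.outdeg a : ℝ) with hF
  set r : Fin G.n → ℝ := hacyc.fix F with hrdef
  have hfix : ∀ a, r a = F a (fun b _ => r b) := fun a => hacyc.fix_eq F a
  have hp : ∀ a ∈ G.plus, r a = 1 := by
    intro a ha; rw [hfix a]; simp only [hF, dif_pos ha]
  have hm : ∀ a ∈ G.minus, r a = -1 := by
    intro a ha; rw [hfix a]
    have ha' : a ∉ G.plus := fun h => (G.hdisj.forall_ne_finset h ha) rfl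
    simp only [hF, dif_neg ha', dif_pos ha]
  have hn : ∀ a, G.nonvoter a →
      r a = (∑ b, (G.E a b : ℝ) * r b) / (G.outdeg a : ℝ) := by
    intro a ⟨ha1, ha2⟩
    rw [hfix a]
    simp only [hF, dif_neg ha1, dif_neg ha2]
    congr 1
    refine Finset.sum_congr rfl fun b _ => ?_
    by_cases he : 0 < G.E a b
    · by_cases hb : G.nonvoter b
      · rw [dif_pos ⟨hb, he⟩]
      · rw [dif_neg (fun h => hb h.1)]
        rcases not_and_or.mp hb with h | h
        · push_neg at h
          rw [if_pos h, hp b h]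
        · push_neg at h
          have hbp : b ∉ G.plus := fun hq => (G.hdisj.forall_ne_finset hq h) rfl
          rw [if_neg hbp, if_pos h, hm b h]
    · have : G.E a b = 0 := Nat.eq_zero_of_not_pos he
      simp [this]
  refine ⟨r, ⟨hp, hm, hn⟩, ?_⟩
  rintro r' ⟨hp', hm', hn'⟩
  funext a
  induction a using WellFounded.induction hacyc with
  | _ a ih =>
    by_cases hap : a ∈ G.plus
    · rw [hp' a hap, hp a hap]
    · by_cases ham : a ∈ G.minus
      · rw [hm' a ham, hm a ham]
      · have hna : G.nonvoter a := ⟨hap, ham⟩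
        rw [hn' a hna, hn a hna]
        congr 1
        refine Finset.sum_congr rfl fun b _ => ?_
        by_cases he : 0 < G.E a b
        · by_cases hbp : b ∈ G.plus
          · rw [hp' b hbp, hp b hbp]
          · by_cases hbm : b ∈ G.minus
            · rw [hm' b hbm, hm b hbm]
            · rw [ih b ⟨hna, ⟨hbp, hbm⟩, he⟩]
        · have : G.E a b = 0 := Nat.eq_zero_of_not_pos he
          simp [this]
end

section
/- Let r be the random-walk value function on a finite acyclic voting network. If one negates all votes (swaps V₊ and V₋), the resulting random-walk value function r'' satisfies r''(a) = −r(a) for all nodes a. Consequently the group random-walk recommendation sgn(Σ_{c∈C} sgn(r(c))) is negated for every group C. -/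
/-- The vote-swapped voting network. -/
def VN.swap (G : VN) : VN := ⟨G.n, G.minus, G.plus, G.E, G.hdisj.symm⟩

/-- Swapping `V₊` and `V₋` negates all random-walk values, hence negates the group
random-walk recommendation of every group (vote-symmetry half of Anonymity). -/
theorem randomWalk_vote_symmetry (G : VN) (hacyc : G.Acyclic)
    (r : Fin G.n → ℝ) (hr : RWeq G r)
    (r'' : Fin G.swap.n → ℝ) (hr'' : RWeq G.swap r'') :
    (∀ a, r'' a = - r a) ∧
      ∀ C : Finset (Fin G.n), groupRec G.swap r'' C = - groupRec G r C := by
  obtain ⟨hp, hm, hs, ha⟩ := hr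
  obtain ⟨hp', hm', hs', ha'⟩ := hr''
  have key : ∀ a, r'' a = - r a := by
    intro a
    induction a using WellFounded.induction hacyc with
    | _ a ih =>
      by_cases hap : a ∈ G.plus
      · rw [hp a hap, hm' a hap]
      by_cases ham : a ∈ G.minus
      · rw [hm a ham, hp' a ham]; norm_num
      have hnv : G.nonvoter a := ⟨hap, ham⟩
      have hnv' : G.swap.nonvoter a := ⟨ham, hap⟩
      by_cases hd : G.outdeg a = 0
      · rw [hs a hnv hd, hs' a hnv' hd]; norm_num
      · rw [ha a hnv hd, ha' a hnv' hd]
        simp only [show G.swap.E = G.E from rfl]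
        rw [← neg_div, ← Finset.sum_neg_distrib]
        congr 1
        apply Finset.sum_congr rfl
        intro b _
        by_cases he : 0 < G.E a b
        · by_cases hbp : b ∈ G.plus
          · rw [hp b hbp, hm' b hbp]; ring
          by_cases hbm : b ∈ G.minus
          · rw [hm b hbm, hp' b hbm]; ring
          · rw [ih b ⟨hnv, ⟨hbp, hbm⟩, he⟩]; ring
        · have : G.E a b = 0 := Nat.eq_zero_of_not_pos he
          simp [this]
  refine ⟨key, fun C => ?_⟩
  unfold groupRec
  rw [← Real.sign_neg, ← Finset.sum_neg_distrib]
  congr 1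
  exact Finset.sum_congr rfl fun c _ => by rw [key c, Real.sign_neg]
end

section
/- Let r be the random-walk value function on a finite acyclic voting network, and let π be an isomorphism of voting networks from G to G' (a bijection on nodes preserving V₊, V₋, and edge multiplicities). Then the random-walk value function r' of G' satisfies r'(π(a)) = r(a) for all a, and hence for every group C the group random-walk recommendation of C in G equals that of π(C) in G'. -/
/-- An isomorphism of voting networks preserves random-walk values, hence the group
random-walk recommendation of `C` in `G` equals that of `π(C)` in `G'`
(graph-isomorphism half of Anonymity). -/
theorem randomWalk_isomorphism (G G' : VN) (hacyc : G.Acyclic)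
    (π : Fin G.n ≃ Fin G'.n)
    (hplus : ∀ a, a ∈ G.plus ↔ π a ∈ G'.plus)
    (hminus : ∀ a, a ∈ G.minus ↔ π a ∈ G'.minus)
    (hE : ∀ a b, G'.E (π a) (π b) = G.E a b)
    (r : Fin G.n → ℝ) (hr : RWeq G r)
    (r' : Fin G'.n → ℝ) (hr' : RWeq G' r') :
    (∀ a, r' (π a) = r a) ∧
      ∀ C : Finset (Fin G.n), groupRec G' r' (C.image π) = groupRec G r C := by
  obtain ⟨hp, hm, hs, hi⟩ := hr
  obtain ⟨hp', hm', hs', hi'⟩ := hr'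
  have hnv : ∀ a, G.nonvoter a ↔ G'.nonvoter (π a) := by
    intro a
    simp [VN.nonvoter, hplus a, hminus a]
  have hdeg : ∀ a, G'.outdeg (π a) = G.outdeg a := by
    intro a
    unfold VN.outdeg
    rw [← Equiv.sum_comp π (fun b => G'.E (π a) b)]
    exact Finset.sum_congr rfl fun b _ => hE a b
  have key : ∀ a, r' (π a) = r a := by
    intro a
    induction a using hacyc.induction with
    | _ a IH =>
      by_cases hpa : a ∈ G.plus
      · rw [hp' _ ((hplus a).1 hpa), hp _ hpa]
      · by_cases hma : a ∈ G.minus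
        · rw [hm' _ ((hminus a).1 hma), hm _ hma]
        · have hna : G.nonvoter a := ⟨hpa, hma⟩
          by_cases hd : G.outdeg a = 0
          · rw [hs' _ ((hnv a).1 hna) (by rw [hdeg]; exact hd), hs _ hna hd]
          · rw [hi' _ ((hnv a).1 hna) (by rw [hdeg]; exact hd), hi _ hna hd, hdeg]
            congr 1
            rw [← Equiv.sum_comp π (fun b => (G'.E (π a) b : ℝ) * r' b)]
            refine Finset.sum_congr rfl fun b _ => ?_
            rw [hE a b]
            by_cases hEab : G.E a b = 0
            · simp [hEab]
            · congr 1
              by_cases hpb : b ∈ G.plus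
              · rw [hp' _ ((hplus b).1 hpb), hp _ hpb]
              · by_cases hmb : b ∈ G.minus
                · rw [hm' _ ((hminus b).1 hmb), hm _ hmb]
                · exact IH b ⟨hna, ⟨hpb, hmb⟩, Nat.pos_of_ne_zero hEab⟩
  refine ⟨key, fun C => ?_⟩
  unfold groupRec
  rw [Finset.sum_image (fun x _ y _ h => π.injective h)]
  simp only [key]
end

section
/- Consider a star group with n ≥ 1 voters all labeled +, and m nonvoters where nonvoter uᵢ is connected to all n internal + voters and to dᵢ external − voters, with all uᵢ's edges simple. Then the random-walk value of uᵢ is (n − dᵢ)/(n + dᵢ), and if dᵢ < n for all i then the group random-walk recommendation of the star group is +. -/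
/-- Star group: `n ≥ 1` internal `+` voters (value 1), `m` nonvoters, nonvoter `uᵢ`
connected by single edges to all `n` internal `+` voters and to `dᵢ` external `−`
voters (value −1), so its random-walk value is the average of its out-neighbours'
values. Then `r(uᵢ) = (n − dᵢ)/(n + dᵢ)`, and if `dᵢ < n` for all `i` the group
random-walk recommendation of the star group (the `n` voters and `m` nonvoters) is +. -/
theorem starGroup_centripetal (n m : ℕ) (hn : 1 ≤ n) (d : Fin m → ℕ)
    (r : (Fin n ⊕ (Fin m ⊕ Σ i : Fin m, Fin (d i))) → ℝ)
    (hplus : ∀ j : Fin n, r (Sum.inl j) = 1)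
    (hminus : ∀ p : Σ i : Fin m, Fin (d i), r (Sum.inr (Sum.inr p)) = -1)
    (hnon : ∀ i : Fin m, r (Sum.inr (Sum.inl i)) =
      ((∑ j : Fin n, r (Sum.inl j)) + ∑ q : Fin (d i), r (Sum.inr (Sum.inr ⟨i, q⟩))) /
        ((n : ℝ) + (d i : ℝ))) :
    (∀ i : Fin m, r (Sum.inr (Sum.inl i)) = ((n : ℝ) - (d i : ℝ)) / ((n : ℝ) + (d i : ℝ))) ∧
    ((∀ i, d i < n) →
      Real.sign ((∑ j : Fin n, Real.sign (r (Sum.inl j))) +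
        ∑ i : Fin m, Real.sign (r (Sum.inr (Sum.inl i)))) = 1) := by
  have hval : ∀ i : Fin m, r (Sum.inr (Sum.inl i)) =
      ((n : ℝ) - (d i : ℝ)) / ((n : ℝ) + (d i : ℝ)) := by
    intro i
    rw [hnon i]
    simp only [hplus, fun q => hminus ⟨i, q⟩]
    simp [sub_eq_add_neg]
  refine ⟨hval, fun hd => ?_⟩
  have h1 : ∀ j : Fin n, Real.sign (r (Sum.inl j)) = 1 := fun j => by
    rw [hplus j]; exact Real.sign_one
  have h2 : ∀ i : Fin m, Real.sign (r (Sum.inr (Sum.inl i))) = 1 := fun i => by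
    rw [hval i]
    apply Real.sign_of_pos
    apply div_pos
    · have h := hd i; have h' : (d i : ℝ) < n := by exact_mod_cast h
      linarith
    · have h1' : (0:ℝ) < n := by exact_mod_cast hn
      have h2' : (0:ℝ) ≤ (d i : ℝ) := Nat.cast_nonneg _
      linarith
  simp only [h1, h2, Finset.sum_const, Finset.card_univ, Fintype.card_fin, nsmul_eq_mul,
    mul_one]
  apply Real.sign_of_pos
  have hn' : (1:ℝ) ≤ n := by exact_mod_cast hn
  have hm' : (0:ℝ) ≤ m := Nat.cast_nonneg _
  linarith
end

section
/- The group random-walk recommendation system satisfies (β, r)-centrifugality with β = 2 (indeed any β > 1) and r = 2 (indeed any r > 1): for any star group with n + voters and m nonvoters where m/n ≥ r and every nonvoter is connected to at least β·n external − voters, the group recommendation is −. -/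
/-- The group random-walk recommendation system is (β, ρ)-centrifugal for any β > 1
and ρ > 1: on a star group with `n` internal `+` voters and `m` nonvoters where
`m/n ≥ ρ` and every nonvoter is connected to at least `β·n` external `−` voters,
the group recommendation is `−`. -/
theorem starGroup_centrifugal (β ρ : ℝ) (hβ : 1 < β) (hρ : 1 < ρ)
    (n m : ℕ) (hn : 1 ≤ n) (hm : (m : ℝ) / (n : ℝ) ≥ ρ)
    (d : Fin m → ℕ) (hd : ∀ i, (d i : ℝ) ≥ β * (n : ℝ))
    (r : (Fin n ⊕ (Fin m ⊕ Σ i : Fin m, Fin (d i))) → ℝ)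
    (hplus : ∀ j : Fin n, r (Sum.inl j) = 1)
    (hminus : ∀ p : Σ i : Fin m, Fin (d i), r (Sum.inr (Sum.inr p)) = -1)
    (hnon : ∀ i : Fin m, r (Sum.inr (Sum.inl i)) =
      ((∑ j : Fin n, r (Sum.inl j)) + ∑ q : Fin (d i), r (Sum.inr (Sum.inr ⟨i, q⟩))) /
        ((n : ℝ) + (d i : ℝ))) :
    Real.sign ((∑ j : Fin n, Real.sign (r (Sum.inl j))) +
      ∑ i : Fin m, Real.sign (r (Sum.inr (Sum.inl i)))) = -1 := by
  have hn' : (0:ℝ) < n := by exact_mod_cast hn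
  have hnm : (n:ℝ) < m := by
    have : ρ * n ≤ m := by
      rw [ge_iff_le, le_div_iff₀ hn'] at hm; linarith
    nlinarith
  have hsignplus : ∀ j : Fin n, Real.sign (r (Sum.inl j)) = 1 := by
    intro j; rw [hplus j]; exact Real.sign_one
  have hsignnon : ∀ i : Fin m, Real.sign (r (Sum.inr (Sum.inl i))) = -1 := by
    intro i
    have hdi : (n:ℝ) < d i := by
      have := hd i; nlinarith
    have : r (Sum.inr (Sum.inl i)) = ((n:ℝ) - (d i : ℝ)) / ((n:ℝ) + (d i : ℝ)) := by
      rw [hnon i]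
      congr 1
      rw [Finset.sum_congr rfl (fun j _ => hplus j),
        Finset.sum_congr rfl (fun q _ => hminus ⟨i, q⟩)]
      simp; ring
    rw [this]
    apply Real.sign_of_neg
    apply div_neg_of_neg_of_pos <;> linarith
  rw [Finset.sum_congr rfl (fun j _ => hsignplus j),
    Finset.sum_congr rfl (fun i _ => hsignnon i)]
  simp only [Finset.sum_const, Finset.card_univ, Fintype.card_fin, nsmul_eq_mul, mul_one,
    mul_neg_one]
  apply Real.sign_of_neg
  linarith
end

section
/- In a finite voting network whose nonvoter-induced subgraph is acyclic, applying the trust-propagation transformation (replacing k parallel edges (u,v) to a nonvoter v having exactly out-edges (v,w₁),…,(v,w_k) with direct edges (u,w₁),…,(u,w_k)) does not change the random-walk value r(a) of any node a ≠ v. -/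
/-- Trust propagation: if nonvoter `v` has exactly `k` outgoing edges
`(v,w₁),…,(v,w_k)` and `u` is connected to `v` by `k` parallel edges, replacing `u`'s
edges to `v` by the direct edges `(u,w₁),…,(u,w_k)` does not change the random-walk
value of any node other than `v`. -/
theorem randomWalk_trust_propagation (G : VN) (hacyc : G.Acyclic)
    (u v : Fin G.n) (huv : u ≠ v)
    (hu : G.nonvoter u) (hv : G.nonvoter v)
    (k : ℕ) (hk : 1 ≤ k) (hout : G.outdeg v = k) (hmult : G.E u v = k)
    (hvu : G.E v u = 0)
    (r : Fin G.n → ℝ) (hr : RWeq G r)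
    (r' : Fin G.n → ℝ)
    (hr' : RWeq
      ⟨G.n, G.plus, G.minus,
        fun a b => if a = u then (if b = v then 0 else G.E u b + G.E v b) else G.E a b,
        G.hdisj⟩ r') :
    ∀ a : Fin G.n, a ≠ v → r' a = r a := by
  classical
  -- the modified edge function and graph
  set E' : Fin G.n → Fin G.n → ℕ :=
    fun a b => if a = u then (if b = v then 0 else G.E u b + G.E v b) else G.E a b with hE'def
  have hEvv : G.E v v = 0 := by
    by_contra h
    exact hacyc.isIrrefl.irrefl v ⟨hv, hv, Nat.pos_of_ne_zero h⟩
  have hkne : (k : ℝ) ≠ 0 := by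
    exact_mod_cast Nat.one_le_iff_ne_zero.mp hk
  -- generic summation identity
  have key : ∀ {M : Type} [AddCommMonoid M] (f : Fin G.n → M),
      (∑ b, if b = v then 0 else f b) + f v = ∑ b, f b := by
    intro M _ f
    have h1 : (∑ b, if b = v then (f b) else 0) = f v := by simp
    rw [← h1, ← Finset.sum_add_distrib]
    refine Finset.sum_congr rfl fun b _ => ?_
    by_cases hb : b = v <;> simp [hb]
  -- out-degrees in the new graph
  have houtdeg_ne : ∀ a, a ≠ u → (∑ b, E' a b) = G.outdeg a := by
    intro a ha
    simp only [hE'def, if_neg ha, VN.outdeg]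
  have houtdeg_u : (∑ b, E' u b) = G.outdeg u := by
    have h1 : (∑ b, E' u b) + (G.E u v + G.E v v) = ∑ b, (G.E u b + G.E v b) := by
      simpa [hE'def] using key (fun b => G.E u b + G.E v b)
    have h2 : (∑ b, (G.E u b + G.E v b)) = G.outdeg u + G.outdeg v := by
      simp [VN.outdeg, Finset.sum_add_distrib]
    omega
  -- weighted sums in the new graph
  have hrv : (k : ℝ) * r v = ∑ b, (G.E v b : ℝ) * r b := by
    have := hr.2.2.2 v hv (by omega)
    rw [hout] at this
    rw [this]
    field_simp
  have hsum_u : (∑ b, (E' u b : ℝ) * r b) = ∑ b, (G.E u b : ℝ) * r b := by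
    have h1 : (∑ b, (E' u b : ℝ) * r b) + ((G.E u v + G.E v v : ℕ) : ℝ) * r v
        = ∑ b, ((G.E u b + G.E v b : ℕ) : ℝ) * r b := by
      have := key (M := ℝ) (fun b => ((G.E u b + G.E v b : ℕ) : ℝ) * r b)
      simp only [hE'def] at this ⊢
      rw [← this]
      congr 1
      refine Finset.sum_congr rfl fun b _ => ?_
      by_cases hb : b = v <;> simp [hb]
    have h2 : (∑ b, ((G.E u b + G.E v b : ℕ) : ℝ) * r b)
        = (∑ b, (G.E u b : ℝ) * r b) + ∑ b, (G.E v b : ℝ) * r b := by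
      rw [← Finset.sum_add_distrib]
      refine Finset.sum_congr rfl fun b _ => ?_
      push_cast
      ring
    rw [h2] at h1
    rw [hmult, hEvv] at h1
    push_cast at h1
    rw [← hrv] at h1
    linarith
  -- r satisfies the random-walk equations in the new graph
  set G' : VN := ⟨G.n, G.plus, G.minus, E', G.hdisj⟩ with hG'def
  have hout_u_ne : G.outdeg u ≠ 0 := by
    have hle : G.E u v ≤ G.outdeg u := Finset.single_le_sum (fun b _ => Nat.zero_le _) (Finset.mem_univ v)
    omega
  have hrG' : RWeq G' r := by
    refine ⟨hr.1, hr.2.1, ?_, ?_⟩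
    · intro a ha hd
      by_cases hau : a = u
      · exfalso
        apply hout_u_ne
        rw [← houtdeg_u]
        simpa [hau, VN.outdeg, hG'def] using hd
      · exact hr.2.2.1 a ha (by rwa [show G'.outdeg a = G.outdeg a from houtdeg_ne a hau] at hd)
    · intro a ha hd
      by_cases hau : a = u
      · rw [hau]
        have hd' : G'.outdeg u = G.outdeg u := houtdeg_u
        rw [show G'.E = E' from rfl, hd', hsum_u]
        exact hr.2.2.2 u hu hout_u_ne
      · have hd' : G'.outdeg a = G.outdeg a := houtdeg_ne a hau
        rw [show G'.E = E' from rfl, hd']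
        have : ∀ b, E' a b = G.E a b := fun b => by simp [hE'def, hau]
        simp only [this]
        exact hr.2.2.2 a ha (by rwa [hd'] at hd)
  -- the new graph is acyclic
  have hRvu : G.nonvoter u ∧ G.nonvoter v ∧ 0 < G.E u v := ⟨hu, hv, by omega⟩
  have hwf : WellFounded (fun b a : Fin G.n => G.nonvoter a ∧ G.nonvoter b ∧ 0 < E' a b) := by
    refine Subrelation.wf ?_ hacyc.transGen
    rintro b a ⟨ha, hb, hpos⟩
    by_cases hau : a = u
    · rw [hau] at hpos
      by_cases hbv : b = v
      · simp [hE'def, hbv] at hpos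
      · simp only [hE'def, if_pos rfl, if_neg hbv] at hpos
        rw [hau]
        rcases Nat.lt_or_ge 0 (G.E u b) with h | h
        · exact Relation.TransGen.single ⟨hu, hb, h⟩
        · have : 0 < G.E v b := by omega
          exact Relation.TransGen.head ⟨hv, hb, this⟩ (Relation.TransGen.single hRvu)
    · exact Relation.TransGen.single ⟨ha, hb, by simpa [hE'def, hau] using hpos⟩
  -- uniqueness by well-founded induction
  have main : ∀ a : Fin G.n, r' a = r a := by
    intro a
    refine hwf.induction (C := fun a => r' a = r a) a ?_
    intro a IH
    by_cases hap : a ∈ G.plus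
    · rw [hr'.1 a hap, hr.1 a hap]
    by_cases ham : a ∈ G.minus
    · rw [hr'.2.1 a ham, hr.2.1 a ham]
    have ha : G.nonvoter a := ⟨hap, ham⟩
    by_cases hd : G'.outdeg a = 0
    · rw [hr'.2.2.1 a ha hd, hrG'.2.2.1 a ha hd]
    · rw [hr'.2.2.2 a ha hd, hrG'.2.2.2 a ha hd]
      congr 1
      refine Finset.sum_congr rfl fun b _ => ?_
      by_cases hEb : E' a b = 0
      · simp [show G'.E = E' from rfl, hEb]
      · have hr'b : r' b = r b := by
          by_cases hbp : b ∈ G.plus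
          · rw [hr'.1 b hbp, hr.1 b hbp]
          by_cases hbm : b ∈ G.minus
          · rw [hr'.2.1 b hbm, hr.2.1 b hbm]
          exact IH b ⟨ha, ⟨hbp, hbm⟩, Nat.pos_of_ne_zero hEb⟩
        rw [hr'b]
  intro a _
  exact main a
end
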